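/- Let ρ, σ ≥ 0 and let S : G_ρ → G_σ be subadditive with S(0) = 0. If S is locally bounded (bounded on a neighbourhood of each point of G_ρ), then liminf_{t → 0} S(t) ≥ 0. -/

import Mathlib

/-!
Near `0` local boundedness gives `S ≤ M`. Subadditivity applied to `t` and its inverse
`t' = -t / (1 + ρ t)` gives `0 = S 0 ≤ S t ∘_σ S t'`, hence `S t ≥ -M / (1 + σ M)`, a lower
bound `c` with `1 + σ c > 0`. So `L = liminf_{t → 0} S t` is finite with `1 + σ L > 0`.
The squaring map `t ↦ t ∘_ρ t` sends punctured neighbourhoods of `0` into themselves and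
`s ↦ s ∘_σ s` is increasing on `1 + σ s > 0`, so `S (t ∘_ρ t) ≤ S t ∘_σ S t` yields
`L ≤ L ∘_σ L`, i.e. `0 ≤ L (1 + σ L)`.
-/

open Filter Topology

def popaMul (ρ x y : ℝ) : ℝ := x + y + ρ * x * y

noncomputable def popaInv (ρ x : ℝ) : ℝ := -x / (1 + ρ * x)

section Algebra

variable {ρ x : ℝ}

theorem one_add_mul_popaInv (hx : 0 < 1 + ρ * x) : 1 + ρ * popaInv ρ x = (1 + ρ * x)⁻¹ := by
  unfold popaInv
  field_simp
  ring

theorem one_add_mul_popaInv_pos (hx : 0 < 1 + ρ * x) : 0 < 1 + ρ * popaInv ρ x := by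
  rw [one_add_mul_popaInv hx]
  positivity

theorem popaMul_popaInv (hx : 0 < 1 + ρ * x) : popaMul ρ x (popaInv ρ x) = 0 := by
  unfold popaMul popaInv
  linear_combination (-x) * mul_inv_cancel₀ hx.ne'

theorem popaMul_self_le_popaMul_self {σ a b : ℝ} (hσ : 0 ≤ σ) (ha : 0 < 1 + σ * a)
    (hab : a ≤ b) : popaMul σ a a ≤ popaMul σ b b := by
  unfold popaMul
  nlinarith [mul_le_mul_of_nonneg_left hab hσ]

theorem neg_div_le_of_popaMul_nonneg {σ a b M : ℝ} (hσ : 0 ≤ σ) (hM : 0 ≤ M)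
    (ha : 0 < 1 + σ * a) (hb : b ≤ M) (hab : 0 ≤ popaMul σ a b) :
    -M / (1 + σ * M) ≤ a := by
  unfold popaMul at hab
  rw [div_le_iff₀ (by positivity)]
  nlinarith [mul_le_mul_of_nonneg_left hb ha.le]

theorem one_add_mul_neg_div_pos {σ M : ℝ} (hσ : 0 ≤ σ) (hM : 0 ≤ M) :
    0 < 1 + σ * (-M / (1 + σ * M)) := by
  have : 1 + σ * (-M / (1 + σ * M)) = (1 + σ * M)⁻¹ := by
    field_simp
    ring
  rw [this]
  positivity

end Algebra

theorem eventually_pos_add_mul {a : ℝ} (ha : 0 < a) (ρ : ℝ) :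
    ∀ᶠ t in 𝓝 (0 : ℝ), 0 < a + ρ * t :=
  (continuous_const.add (continuous_const.mul continuous_id)).continuousAt.eventually_const_lt
    (by simpa using ha)

theorem tendsto_popaInv_nhds_zero (ρ : ℝ) : Tendsto (popaInv ρ) (𝓝 0) (𝓝 0) := by
  have h : ContinuousAt (popaInv ρ) 0 :=
    (continuous_neg.continuousAt).div
      (continuous_const.add (continuous_const.mul continuous_id)).continuousAt (by simp)
  simpa [popaInv] using h.tendsto

theorem tendsto_popaMul_self_nhdsNE_zero (ρ : ℝ) :
    Tendsto (fun t => popaMul ρ t t) (𝓝[≠] 0) (𝓝[≠] 0) := by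
  refine tendsto_nhdsWithin_of_tendsto_nhds_of_eventually_within _ ?_ ?_
  · have h : Continuous (fun t => popaMul ρ t t) := by unfold popaMul; fun_prop
    simpa [popaMul] using (h.tendsto 0).mono_left nhdsWithin_le_nhds
  · filter_upwards [nhdsWithin_le_nhds (eventually_pos_add_mul two_pos ρ), self_mem_nhdsWithin]
      with t h2t ht
    have : popaMul ρ t t = t * (2 + ρ * t) := by unfold popaMul; ring
    rw [this]
    exact mul_ne_zero ht h2t.ne'

theorem liminf_nonneg_of_le_popaMul_self {α : Type*} {l : Filter α} [l.NeBot] {u : α → ℝ}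
    {φ : α → α} {σ c M : ℝ} (hσ : 0 ≤ σ) (hc : 0 < 1 + σ * c) (hφ : Tendsto φ l l)
    (hlow : ∀ᶠ t in l, c ≤ u t) (hup : ∀ᶠ t in l, u t ≤ M)
    (hle : ∀ᶠ t in l, u (φ t) ≤ popaMul σ (u t) (u t)) : 0 ≤ liminf u l := by
  -- Truncating at `c` makes `s ↦ s ∘_σ s` monotone, so that it commutes with `liminf`.
  set g : ℝ → ℝ := fun s => popaMul σ (max s c) (max s c)
  have hg_mono : Monotone g := fun a b hab =>
    popaMul_self_le_popaMul_self hσ (by nlinarith [le_max_right a c]) (max_le_max_right c hab)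
  have hg_cont : Continuous g := by unfold g popaMul; fun_prop
  have hcL : c ≤ liminf u l := le_liminf_of_le (isCoboundedUnder_ge_of_eventually_le l hup) hlow
  have hL : liminf u l ≤ popaMul σ (liminf u l) (liminf u l) := calc
    liminf u l ≤ liminf (u ∘ φ) l := hφ.liminf_le_liminf_comp
      (isCoboundedUnder_ge_of_eventually_le _ (hφ.eventually hup)) ⟨c, hlow⟩
    _ ≤ liminf (g ∘ u) l := by
      refine liminf_le_liminf ?_ ⟨c, hφ.eventually hlow⟩
        (isCoboundedUnder_ge_of_eventually_le l (x := g M) ?_)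
      · filter_upwards [hle, hlow] with t ht hct
        simpa [g, max_eq_left hct] using ht
      · filter_upwards [hup] with t ht using hg_mono ht
    _ = g (liminf u l) := (hg_mono.map_liminf_of_continuousAt u hg_cont.continuousAt
        (isCoboundedUnder_ge_of_eventually_le l hup) ⟨c, hlow⟩).symm
    _ = popaMul σ (liminf u l) (liminf u l) := by simp [g, max_eq_left hcL]
  unfold popaMul at hL
  nlinarith [mul_le_mul_of_nonneg_left hcL hσ]

section Subadditive

variable {ρ σ : ℝ} {S : ℝ → ℝ}

theorem exists_eventually_ge_of_eventually_le {M : ℝ} (hσ : 0 ≤ σ) (hS0 : S 0 = 0)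
    (hmap : ∀ x : ℝ, 0 < 1 + ρ * x → 0 < 1 + σ * S x)
    (hsub : ∀ x y : ℝ, 0 < 1 + ρ * x → 0 < 1 + ρ * y →
      S (popaMul ρ x y) ≤ popaMul σ (S x) (S y))
    (hM : ∀ᶠ t in 𝓝 0, S t ≤ M) : ∃ c, 0 < 1 + σ * c ∧ ∀ᶠ t in 𝓝 0, c ≤ S t := by
  have hM0 : 0 ≤ M := hS0 ▸ hM.self_of_nhds
  refine ⟨-M / (1 + σ * M), one_add_mul_neg_div_pos hσ hM0, ?_⟩
  filter_upwards [eventually_pos_add_mul one_pos ρ, (tendsto_popaInv_nhds_zero ρ).eventually hM]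
    with t ht hinv
  refine neg_div_le_of_popaMul_nonneg hσ hM0 (hmap t ht) hinv ?_
  have h := hsub t (popaInv ρ t) ht (one_add_mul_popaInv_pos ht)
  rwa [popaMul_popaInv ht, hS0] at h

end Subadditive

theorem popa_subadditive_liminf_general (ρ σ : ℝ) (hσ : 0 ≤ σ)
    (S : ℝ → ℝ) (hS0 : S 0 = 0)
    (hmap : ∀ x : ℝ, 0 < 1 + ρ * x → 0 < 1 + σ * S x)
    (hsub : ∀ x y : ℝ, 0 < 1 + ρ * x → 0 < 1 + ρ * y →
      S (x + y + ρ * x * y) ≤ S x + S y + σ * S x * S y)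
    (hloc : ∀ x : ℝ, 0 < 1 + ρ * x → ∃ ε > (0 : ℝ), ∃ m M : ℝ,
      ∀ y ∈ Set.Ioo (x - ε) (x + ε), m ≤ S y ∧ S y ≤ M) :
    0 ≤ Filter.liminf S (𝓝[≠] (0 : ℝ)) := by
  obtain ⟨ε, hε, _, M, hbd⟩ := hloc 0 (by simp)
  have hM : ∀ᶠ t in 𝓝 (0 : ℝ), S t ≤ M := by
    filter_upwards [Ioo_mem_nhds (by linarith : 0 - ε < 0) (by linarith : 0 < 0 + ε)]
      with t ht using (hbd t ht).2
  obtain ⟨c, hc, hcS⟩ := exists_eventually_ge_of_eventually_le hσ hS0 hmap hsub hM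
  refine liminf_nonneg_of_le_popaMul_self hσ hc (tendsto_popaMul_self_nhdsNE_zero ρ)
    (nhdsWithin_le_nhds hcS) (nhdsWithin_le_nhds hM) ?_
  filter_upwards [nhdsWithin_le_nhds (eventually_pos_add_mul one_pos ρ)] with t ht
    using hsub t t ht ht

/-- **Prop. 5(ii).** For `ρ, σ ≥ 0`, a subadditive map
`S : (G_ρ, ∘_ρ) → (G_σ, ∘_σ)` with `S(0) = 0` which is locally bounded on `G_ρ`
satisfies `liminf_{t → 0} S(t) ≥ 0`. -/
theorem popa_subadditive_liminf (ρ σ : ℝ) (hρ : 0 ≤ ρ) (hσ : 0 ≤ σ)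
    (S : ℝ → ℝ) (hS0 : S 0 = 0)
    (hmap : ∀ x : ℝ, 0 < 1 + ρ * x → 0 < 1 + σ * S x)
    (hsub : ∀ x y : ℝ, 0 < 1 + ρ * x → 0 < 1 + ρ * y →
      S (x + y + ρ * x * y) ≤ S x + S y + σ * S x * S y)
    (hloc : ∀ x : ℝ, 0 < 1 + ρ * x → ∃ ε > (0 : ℝ), ∃ m M : ℝ,
      ∀ y ∈ Set.Ioo (x - ε) (x + ε), m ≤ S y ∧ S y ≤ M) :
    0 ≤ Filter.liminf S (𝓝[≠] (0 : ℝ)) :=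
  popa_subadditive_liminf_general ρ σ hσ S hS0 hmap hsub hloc
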